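/- Let X : Ω → ℝⁿ be a zero-mean random vector that is sub-Gaussian with matrix variance proxy Σ ≻ 0. Then for every m > 0 and every τ ≥ 0, Pr{ ‖X‖_{Σ⁻¹} ≥ τ } ≤ ((1 + m)/m)^{n/2} · exp( −τ² / (2 + 2m) ), where ‖x‖_{Σ⁻¹} := √(xᵀΣ⁻¹x). -/

import Mathlib

/-!
Whitening by a matrix `R` with `Rᵀ R = Σ⁻¹` turns `X` into `Z = R X`, which is sub-Gaussian
with identity proxy and satisfies `‖X‖_{Σ⁻¹} = |Z|`. The Gaussian average of `exp (lᵀ z)` over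
`l ~ N(0, s I)` is `exp (s |z|² / 2)`, so averaging `E exp (lᵀ Z) ≤ exp (|l|² / 2)` over the same
`l` gives `E exp (s |Z|² / 2) ≤ (1 - s)^{-n/2}`. Chernoff's bound for `|Z|² ≥ τ²` with
`s = 1 / (1 + m)` is the claim.
-/

open MeasureTheory Matrix

noncomputable section

/-- A random vector `X` with mean `μ` is sub-Gaussian with matrix variance proxy `S`
(`X ~ SG(μ, S)`): its moment generating function exists and
`E[exp(λᵀ(X − μ))] ≤ exp(λᵀ S λ / 2)` for all `λ ∈ ℝⁿ`. -/
def IsSubGaussianMat {Ω : Type*} [MeasurableSpace Ω] {n : ℕ} (P : Measure Ω)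
    (X : Ω → Fin n → ℝ) (μ : Fin n → ℝ) (S : Matrix (Fin n) (Fin n) ℝ) : Prop :=
  ∀ l : Fin n → ℝ,
    Integrable (fun ω => Real.exp (l ⬝ᵥ (X ω - μ))) P ∧
    ∫ ω, Real.exp (l ⬝ᵥ (X ω - μ)) ∂P ≤ Real.exp ((l ⬝ᵥ (S *ᵥ l)) / 2)

open ProbabilityTheory Real
open scoped ENNReal NNReal MatrixOrder

theorem lintegral_pi_prod_eq_prod {ι : Type*} [Fintype ι] {Ω : ι → Type*}
    [∀ i, MeasurableSpace (Ω i)] (μ : (i : ι) → Measure (Ω i)) [∀ i, IsProbabilityMeasure (μ i)]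
    (f : (i : ι) → Ω i → ℝ≥0∞) (hf : ∀ i, Measurable (f i)) :
    ∫⁻ x, ∏ i, f i (x i) ∂Measure.pi μ = ∏ i, ∫⁻ y, f i y ∂μ i :=
  (lintegral_prod_eq_prod_lintegral_of_indepFun Finset.univ
    (fun i (x : (i : ι) → Ω i) => f i (x i)) (iIndepFun_pi fun i => (hf i).aemeasurable)
    fun i => (hf i).comp (measurable_pi_apply i)).trans
    (Finset.prod_congr rfl fun i _ => (measurePreserving_eval μ i).lintegral_comp (hf i))

theorem ENNReal.ofReal_exp_sum {ι : Type*} (s : Finset ι) (f : ι → ℝ) :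
    ENNReal.ofReal (rexp (∑ i ∈ s, f i)) = ∏ i ∈ s, ENNReal.ofReal (rexp (f i)) := by
  rw [Real.exp_sum, ENNReal.ofReal_prod_of_nonneg fun i _ => (exp_pos _).le]

section Gaussian

variable {v : ℝ≥0}

theorem lintegral_exp_mul_gaussianReal (μ t : ℝ) :
    ∫⁻ x, ENNReal.ofReal (rexp (t * x)) ∂gaussianReal μ v
      = ENNReal.ofReal (rexp (μ * t + v * t ^ 2 / 2)) := by
  rw [← ofReal_integral_eq_lintegral_ofReal (integrable_exp_mul_gaussianReal t)
    (ae_of_all _ fun _ => (exp_pos _).le), ← congrFun mgf_id_gaussianReal t]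
  rfl

theorem lintegral_exp_sq_div_two_gaussianReal (hv : v < 1) :
    ∫⁻ x, ENNReal.ofReal (rexp (x ^ 2 / 2)) ∂gaussianReal 0 v
      = ENNReal.ofReal (√(1 - (v : ℝ))⁻¹) := by
  rcases eq_or_ne v 0 with rfl | hv0
  · simp [gaussianReal_zero_var]
  have h1v : (0 : ℝ) < 1 - v := sub_pos.2 (by exact_mod_cast hv)
  have hb : 0 < (1 - (v : ℝ)) / (2 * v) := by positivity
  have hdensity : ∀ x : ℝ, gaussianPDF 0 v x * ENNReal.ofReal (rexp (x ^ 2 / 2))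
      = ENNReal.ofReal ((√(2 * π * v))⁻¹ * rexp (-((1 - v) / (2 * v)) * x ^ 2)) := by
    intro x
    have hexponent : -(x - 0) ^ 2 / (2 * v) + x ^ 2 / 2 = -((1 - v) / (2 * v)) * x ^ 2 := by
      field_simp
      ring
    rw [gaussianPDF, gaussianPDFReal, ← ENNReal.ofReal_mul (by positivity), mul_assoc,
      ← exp_add, hexponent]
  rw [gaussianReal_of_var_ne_zero _ hv0,
    lintegral_withDensity_eq_lintegral_mul _ (measurable_gaussianPDF _ _) (by fun_prop)]
  simp_rw [Pi.mul_apply, hdensity]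
  rw [← ofReal_integral_eq_lintegral_ofReal ((integrable_exp_neg_mul_sq hb).const_mul _)
    (ae_of_all _ fun x => by positivity), integral_const_mul, integral_gaussian,
    show π / ((1 - (v : ℝ)) / (2 * v)) = (2 * π * v) * (1 - (v : ℝ))⁻¹ by field_simp,
    Real.sqrt_mul (x := 2 * π * v) (by positivity), inv_mul_cancel_left₀ (by positivity)]

variable {ι : Type*} [Fintype ι]

theorem lintegral_exp_dotProduct_pi_gaussianReal (z : ι → ℝ) :
    ∫⁻ l, ENNReal.ofReal (rexp (l ⬝ᵥ z)) ∂Measure.pi (fun _ => gaussianReal 0 v)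
      = ENNReal.ofReal (rexp (v * (z ⬝ᵥ z) / 2)) := by
  simp_rw [dotProduct, ENNReal.ofReal_exp_sum, mul_comm _ (z _)]
  rw [lintegral_pi_prod_eq_prod _ (fun i x => ENNReal.ofReal (rexp (z i * x))) (by fun_prop)]
  simp_rw [lintegral_exp_mul_gaussianReal, zero_mul, zero_add, Finset.mul_sum, Finset.sum_div,
    ENNReal.ofReal_exp_sum, sq]

theorem lintegral_exp_dotProduct_self_div_two_pi_gaussianReal (hv : v < 1) :
    ∫⁻ l, ENNReal.ofReal (rexp (l ⬝ᵥ l / 2)) ∂Measure.pi (fun _ : ι => gaussianReal 0 v)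
      = ENNReal.ofReal ((1 - (v : ℝ))⁻¹ ^ ((Fintype.card ι : ℝ) / 2)) := by
  simp_rw [dotProduct, Finset.sum_div, ENNReal.ofReal_exp_sum, ← sq]
  rw [lintegral_pi_prod_eq_prod _ (fun _ x => ENNReal.ofReal (rexp (x ^ 2 / 2))) (by fun_prop)]
  have h1v : (0 : ℝ) ≤ (1 - (v : ℝ))⁻¹ := inv_nonneg.2 (sub_nonneg.2 (by exact_mod_cast hv.le))
  rw [Finset.prod_const, lintegral_exp_sq_div_two_gaussianReal hv, Finset.card_univ,
    ← ENNReal.ofReal_pow (sqrt_nonneg _), sqrt_eq_rpow, ← rpow_mul_natCast h1v]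
  ring_nf

end Gaussian

theorem measure_ge_le_exp_mul_lintegral_exp {Ω : Type*} [MeasurableSpace Ω] {P : Measure Ω}
    {g : Ω → ℝ} (hg : AEMeasurable g P) (a : ℝ) {t : ℝ} (ht : 0 ≤ t) :
    P {ω | a ≤ g ω} ≤ ENNReal.ofReal (rexp (-(t * a))) * ∫⁻ ω, ENNReal.ofReal (rexp (t * g ω)) ∂P :=
  calc P {ω | a ≤ g ω}
      ≤ P {ω | ENNReal.ofReal (rexp (t * a)) ≤ ENNReal.ofReal (rexp (t * g ω))} :=
        measure_mono fun ω hω =>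
          ENNReal.ofReal_le_ofReal (exp_le_exp.2 (mul_le_mul_of_nonneg_left hω ht))
    _ ≤ (∫⁻ ω, ENNReal.ofReal (rexp (t * g ω)) ∂P) / ENNReal.ofReal (rexp (t * a)) :=
        meas_ge_le_lintegral_div (by fun_prop) (by positivity) ENNReal.ofReal_ne_top
    _ = _ := by
        rw [ENNReal.div_eq_inv_mul, ← ENNReal.ofReal_inv_of_pos (exp_pos _), ← exp_neg]

theorem Matrix.PosDef.exists_whitening {n : Type*} [Fintype n] [DecidableEq n]
    {S : Matrix n n ℝ} (hS : S.PosDef) : ∃ R : Matrix n n ℝ, Rᵀ * R = S⁻¹ ∧ R * S * Rᵀ = 1 := by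
  obtain ⟨R, hR⟩ := CStarAlgebra.nonneg_iff_eq_star_mul_self.mp hS.inv.posSemidef.nonneg
  have hRR : Rᵀ * R = S⁻¹ := by
    rw [hR, star_eq_conjTranspose, conjTranspose_eq_transpose_of_trivial]
  refine ⟨R, hRR, ?_⟩
  have hinv : Rᵀ * (R * S) = 1 := by
    rw [← Matrix.mul_assoc, hRR, nonsing_inv_mul _ hS.det_pos.ne'.isUnit]
  exact mul_eq_one_comm.mp hinv

theorem Matrix.dotProduct_transpose_mul_self_mulVec {m n : Type*} [Fintype m] [Fintype n]
    (R : Matrix m n ℝ) (x : n → ℝ) : x ⬝ᵥ ((Rᵀ * R) *ᵥ x) = (R *ᵥ x) ⬝ᵥ (R *ᵥ x) := by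
  rw [← mulVec_mulVec, dotProduct_mulVec, ← mulVec_transpose, transpose_transpose]

namespace IsSubGaussianMat

variable {Ω : Type*} [MeasurableSpace Ω] {P : Measure Ω} {n : ℕ}

theorem mulVec {k : ℕ} {X : Ω → Fin n → ℝ} {μ : Fin n → ℝ} {S : Matrix (Fin n) (Fin n) ℝ}
    (h : IsSubGaussianMat P X μ S) (A : Matrix (Fin k) (Fin n) ℝ) :
    IsSubGaussianMat P (fun ω => A *ᵥ X ω) (A *ᵥ μ) (A * S * Aᵀ) := by
  intro l
  have htranspose : ∀ y, l ⬝ᵥ (A *ᵥ y) = (Aᵀ *ᵥ l) ⬝ᵥ y := fun y => by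
    rw [dotProduct_mulVec, mulVec_transpose]
  simp_rw [← mulVec_sub, htranspose, ← mulVec_mulVec, htranspose]
  exact h (Aᵀ *ᵥ l)

theorem lintegral_exp_mul_dotProduct_self_le [SFinite P] {Z : Ω → Fin n → ℝ} (hZ : Measurable Z)
    (h : IsSubGaussianMat P Z 0 1) {s : ℝ≥0} (hs : s < 1) :
    ∫⁻ ω, ENNReal.ofReal (rexp (s * (Z ω ⬝ᵥ Z ω) / 2)) ∂P
      ≤ ENNReal.ofReal ((1 - (s : ℝ))⁻¹ ^ ((n : ℝ) / 2)) := by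
  let ν : Measure (Fin n → ℝ) := Measure.pi fun _ => gaussianReal 0 s
  have hmgf : ∀ l, ∫⁻ ω, ENNReal.ofReal (rexp (l ⬝ᵥ Z ω)) ∂P ≤ ENNReal.ofReal (rexp (l ⬝ᵥ l / 2)) :=
    fun l => by
      obtain ⟨hint, hle⟩ := h l
      simp only [sub_zero, one_mulVec] at hint hle
      rw [← ofReal_integral_eq_lintegral_ofReal hint (ae_of_all _ fun _ => (exp_pos _).le)]
      exact ENNReal.ofReal_le_ofReal hle
  calc ∫⁻ ω, ENNReal.ofReal (rexp (s * (Z ω ⬝ᵥ Z ω) / 2)) ∂P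
      = ∫⁻ ω, ∫⁻ l, ENNReal.ofReal (rexp (l ⬝ᵥ Z ω)) ∂ν ∂P := by
        simp_rw [ν, lintegral_exp_dotProduct_pi_gaussianReal]
    _ = ∫⁻ l, ∫⁻ ω, ENNReal.ofReal (rexp (l ⬝ᵥ Z ω)) ∂P ∂ν :=
        lintegral_lintegral_swap (by fun_prop)
    _ ≤ ∫⁻ l, ENNReal.ofReal (rexp (l ⬝ᵥ l / 2)) ∂ν := lintegral_mono hmgf
    _ = _ := by
        rw [lintegral_exp_dotProduct_self_div_two_pi_gaussianReal hs, Fintype.card_fin]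

end IsSubGaussianMat

/-- if `X` is zero-mean sub-Gaussian with matrix variance proxy `Σ ≻ 0`, then
for every `m > 0` and `τ ≥ 0`,
`Pr{‖X‖_{Σ⁻¹} ≥ τ} ≤ ((1 + m)/m)^{n/2} exp(−τ² / (2 + 2m))`. -/
theorem subGaussian_mahalanobis_tail_m {Ω : Type*} [MeasurableSpace Ω] {n : ℕ}
    (P : Measure Ω) [IsProbabilityMeasure P]
    (X : Ω → Fin n → ℝ) (hX : Measurable X)
    (Sig : Matrix (Fin n) (Fin n) ℝ) (hSig : Sig.PosDef)
    (hsg : IsSubGaussianMat P X 0 Sig)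
    (m : ℝ) (hm : 0 < m) (τ : ℝ) (hτ : 0 ≤ τ) :
    P {ω | τ ≤ Real.sqrt (X ω ⬝ᵥ (Sig⁻¹ *ᵥ X ω))} ≤
      ENNReal.ofReal
        (((1 + m) / m) ^ ((n : ℝ) / 2) * Real.exp (-τ ^ 2 / (2 + 2 * m))) := by
  obtain ⟨R, hRR, hRSR⟩ := hSig.exists_whitening
  set Z : Ω → Fin n → ℝ := fun ω => R *ᵥ X ω
  have hZ : IsSubGaussianMat P Z 0 1 := by simpa [hRSR] using hsg.mulVec R
  let s : ℝ≥0 := ⟨(1 + m)⁻¹, by positivity⟩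
  have hs : s < 1 := by
    rw [← NNReal.coe_lt_coe]
    exact inv_lt_one_of_one_lt₀ (by linarith)
  have hs_coe : (s : ℝ) = (1 + m)⁻¹ := rfl
  have hevent : {ω | τ ≤ √(X ω ⬝ᵥ (Sig⁻¹ *ᵥ X ω))} = {ω | τ ^ 2 ≤ Z ω ⬝ᵥ Z ω} := by
    ext ω
    have hnonneg : 0 ≤ Z ω ⬝ᵥ Z ω := by simpa using dotProduct_self_star_nonneg (Z ω)
    rw [Set.mem_ofPred_eq, Set.mem_ofPred_eq, ← hRR, dotProduct_transpose_mul_self_mulVec]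
    exact Real.le_sqrt hτ hnonneg
  calc P {ω | τ ≤ √(X ω ⬝ᵥ (Sig⁻¹ *ᵥ X ω))}
      ≤ ENNReal.ofReal (rexp (-(s / 2 * τ ^ 2)))
          * ∫⁻ ω, ENNReal.ofReal (rexp (s / 2 * (Z ω ⬝ᵥ Z ω))) ∂P := by
        rw [hevent]
        exact measure_ge_le_exp_mul_lintegral_exp (by fun_prop) _ (by positivity)
    _ ≤ ENNReal.ofReal (rexp (-(s / 2 * τ ^ 2)))
          * ENNReal.ofReal ((1 - (s : ℝ))⁻¹ ^ ((n : ℝ) / 2)) := by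
        gcongr
        simpa only [mul_div_right_comm] using
          hZ.lintegral_exp_mul_dotProduct_self_le (by fun_prop) hs
    _ = _ := by
        rw [← ENNReal.ofReal_mul (exp_pos _).le, mul_comm, hs_coe]
        congr 3
        · rw [show 1 - (1 + m)⁻¹ = m / (1 + m) by field_simp; ring, inv_div]
        · field_simp
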